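/- arXiv:1504.04521 — 5 statements merged into one kernel-verified Lean document; each statement's English description precedes it below -/
import Mathlib

section
/- For every a ∈ ℝ \ {0}, the set Λ_a of complex solutions of the characteristic equation λ − a ∫_{−1}^0 e^{λu} du = 0 is nonempty. -/
/-!
For `λ ≠ 0` the characteristic equation reads `λ² = a (1 - e^{-λ})`, equivalently
`e^{-λ} = 1 - λ²/a`. Choose `c` large with `e^{ic} = a/|a|`; then near `ic` the right-hand side
is close to the positive real `c²/|a|`, so on the disc `|λ - ic| ≤ c/4` the equation is the
fixed-point equation of `λ ↦ ic - log (e^{ic} - λ²/|a|)` (principal branch). Its derivative is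
`O(1/c)` and `|log| = O(log c)` there, so for `c` large this map is a contraction of the disc into
itself, and Banach's fixed-point theorem gives a root.
-/

open MeasureTheory

/-- The characteristic function `h_a(λ) = λ − a ∫_{−1}^0 e^{λu} du`. -/
noncomputable def charFn (a : ℝ) (lam : ℂ) : ℂ :=
  lam - a * ∫ u in (-1:ℝ)..0, Complex.exp (lam * u)

/-- The set `Λ_a` of complex solutions of the characteristic equation. -/
def charRoots (a : ℝ) : Set ℂ := {lam | charFn a lam = 0}

open Complex Set Metric Filter

theorem exists_fixedPoint_of_nnnorm_hasDerivWithin_le {𝕜 : Type*} [RCLike 𝕜]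
    {f f' : 𝕜 → 𝕜} {s : Set 𝕜} {K : NNReal} (hK : K < 1) (hs : Convex ℝ s) (hsc : IsClosed s)
    (hne : s.Nonempty) (hf : ∀ x ∈ s, HasDerivWithinAt f (f' x) s x)
    (hf' : ∀ x ∈ s, ‖f' x‖₊ ≤ K) (hmaps : MapsTo f s s) : ∃ x ∈ s, f x = x := by
  obtain ⟨x₀, hx₀⟩ := hne
  have hcontr : ContractingWith K (hmaps.restrict f s s) :=
    ⟨hK, (hs.lipschitzOnWith_of_nnnorm_hasDerivWithin_le hf hf').mapsToRestrict hmaps⟩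
  obtain ⟨x, hx, hfix, -⟩ :=
    hcontr.exists_fixedPoint' hsc.isComplete hmaps hx₀ (edist_ne_top _ _)
  exact ⟨x, hx, hfix⟩

section ClosedBall

variable {σ : ℂ} {b c : ℝ} {z : ℂ}

theorem norm_le_of_mem_closedBall_mul_I (hz : z ∈ closedBall (c * I) (c / 4)) :
    ‖z‖ ≤ 5 * c / 4 := by
  have hc : 0 ≤ c := by linarith [nonempty_closedBall.mp ⟨z, hz⟩]
  calc ‖z‖ ≤ ‖c * I‖ + ‖z - c * I‖ := norm_le_norm_add_norm_sub' z _
    _ ≤ c + c / 4 := by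
      gcongr
      · simp [abs_of_nonneg hc]
      · exact mem_closedBall_iff_norm.mp hz
    _ = 5 * c / 4 := by ring

theorem le_norm_of_mem_closedBall_mul_I (hz : z ∈ closedBall (c * I) (c / 4)) :
    3 * c / 4 ≤ ‖z‖ := by
  have him : |z.im - c| ≤ c / 4 := by
    simpa using (abs_im_le_norm (z - c * I)).trans (mem_closedBall_iff_norm.mp hz)
  linarith [(abs_le.mp him).1, (le_abs_self z.im).trans (abs_im_le_norm z)]

theorem re_sq_le_of_mem_closedBall_mul_I (hz : z ∈ closedBall (c * I) (c / 4)) :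
    (z ^ 2).re ≤ -(c ^ 2 / 2) := by
  have hd : ‖z - c * I‖ ≤ c / 4 := mem_closedBall_iff_norm.mp hz
  have hre : |z.re| ≤ c / 4 := by
    simpa using (abs_re_le_norm (z - c * I)).trans hd
  have him : |z.im - c| ≤ c / 4 := by
    simpa using (abs_im_le_norm (z - c * I)).trans hd
  rw [abs_le] at hre him
  have : (z ^ 2).re = z.re ^ 2 - z.im ^ 2 := by simp [sq]
  nlinarith

theorem le_re_sub_sq_div_of_mem_closedBall_mul_I (hσ : ‖σ‖ ≤ 1) (hb : 0 < b)
    (hz : z ∈ closedBall (c * I) (c / 4)) : c ^ 2 / (2 * b) - 1 ≤ (σ - z ^ 2 / b).re := by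
  have hσre : -1 ≤ σ.re := by linarith [neg_abs_le σ.re, abs_re_le_norm σ]
  have hsq : (z ^ 2).re / b ≤ -(c ^ 2 / 2) / b :=
    div_le_div_of_nonneg_right (re_sq_le_of_mem_closedBall_mul_I hz) hb.le
  have : -(c ^ 2 / 2) / b = -(c ^ 2 / (2 * b)) := by field_simp
  rw [sub_re, div_ofReal_re]
  linarith

theorem one_le_re_sub_sq_div_of_mem_closedBall_mul_I (hσ : ‖σ‖ ≤ 1) (hb : 0 < b)
    (hcb : 4 * b ≤ c ^ 2) (hz : z ∈ closedBall (c * I) (c / 4)) : 1 ≤ (σ - z ^ 2 / b).re := by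
  have : 2 ≤ c ^ 2 / (2 * b) := by rw [le_div_iff₀ (by positivity)]; linarith
  linarith [le_re_sub_sq_div_of_mem_closedBall_mul_I hσ hb hz]

theorem norm_sub_sq_div_le_of_mem_closedBall_mul_I (hσ : ‖σ‖ ≤ 1) (hb : 0 < b)
    (hz : z ∈ closedBall (c * I) (c / 4)) : ‖σ - z ^ 2 / b‖ ≤ 1 + 2 * c ^ 2 / b := by
  have hc : 0 ≤ c := by linarith [nonempty_closedBall.mp ⟨z, hz⟩]
  have hz2 : ‖z‖ ^ 2 ≤ 2 * c ^ 2 := by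
    nlinarith [norm_le_of_mem_closedBall_mul_I hz, norm_nonneg z]
  calc ‖σ - z ^ 2 / b‖ ≤ ‖σ‖ + ‖z ^ 2 / b‖ := norm_sub_le _ _
    _ = ‖σ‖ + ‖z‖ ^ 2 / b := by simp [abs_of_pos hb]
    _ ≤ 1 + 2 * c ^ 2 / b := by gcongr

theorem norm_log_sub_sq_div_le_of_mem_closedBall_mul_I (hσ : ‖σ‖ ≤ 1) (hb : 0 < b)
    (hcb : 4 * b ≤ c ^ 2) (hlog : Real.log (1 + 2 * c ^ 2 / b) + 2 ≤ c / 4)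
    (hz : z ∈ closedBall (c * I) (c / 4)) : ‖log (σ - z ^ 2 / b)‖ ≤ c / 4 := by
  set w := σ - z ^ 2 / b
  have hre : 1 ≤ w.re := one_le_re_sub_sq_div_of_mem_closedBall_mul_I hσ hb hcb hz
  have hlog_nonneg : 0 ≤ Real.log ‖w‖ := Real.log_nonneg (hre.trans (re_le_norm _))
  have hlog_le : Real.log ‖w‖ ≤ Real.log (1 + 2 * c ^ 2 / b) :=
    Real.log_le_log (by linarith [re_le_norm w])
      (norm_sub_sq_div_le_of_mem_closedBall_mul_I hσ hb hz)
  have harg : |w.arg| ≤ Real.pi / 2 := abs_arg_le_pi_div_two_iff.mpr (by linarith)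
  calc ‖log w‖ ≤ |Real.log ‖w‖| + |w.arg| := by
        simpa [log_re, log_im] using norm_le_abs_re_add_abs_im (log w)
    _ ≤ c / 4 := by
        rw [abs_of_nonneg hlog_nonneg]
        linarith [Real.pi_lt_four]

theorem norm_two_mul_div_div_sub_sq_div_le_of_mem_closedBall_mul_I (hσ : ‖σ‖ ≤ 1) (hb : 0 < b)
    (hc : 20 ≤ c) (hcb : 4 * b ≤ c ^ 2) (hz : z ∈ closedBall (c * I) (c / 4)) :
    ‖2 * z / b / (σ - z ^ 2 / b)‖ ≤ 1 / 2 := by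
  set w := σ - z ^ 2 / b
  have hre := le_re_sub_sq_div_of_mem_closedBall_mul_I hσ hb hz
  have hw : 0 < ‖w‖ := by
    linarith [one_le_re_sub_sq_div_of_mem_closedBall_mul_I hσ hb hcb hz, re_le_norm w]
  have hbw : c ^ 2 / 2 - b ≤ b * ‖w‖ := by
    have : b * (c ^ 2 / (2 * b) - 1) = c ^ 2 / 2 - b := by field_simp
    rw [← this]
    gcongr
    exact hre.trans (re_le_norm _)
  have hz := norm_le_of_mem_closedBall_mul_I hz
  rw [norm_div, norm_div, div_le_iff₀ hw, norm_mul, norm_real, Real.norm_of_nonneg hb.le,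
    Complex.norm_ofNat, div_le_iff₀ hb]
  nlinarith

theorem exists_exp_sub_eq_sub_sq_div (hσ : ‖σ‖ ≤ 1) (hb : 0 < b)
    (hc : 20 ≤ c) (hcb : 4 * b ≤ c ^ 2) (hlog : Real.log (1 + 2 * c ^ 2 / b) + 2 ≤ c / 4) :
    ∃ z ∈ closedBall (c * I) (c / 4), exp (c * I - z) = σ - z ^ 2 / b := by
  set s := closedBall ((c : ℂ) * I) (c / 4)
  set w : ℂ → ℂ := fun z => σ - z ^ 2 / b
  have hw_pos : ∀ z ∈ s, 0 < (w z).re := fun z hz =>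
    one_pos.trans_le (one_le_re_sub_sq_div_of_mem_closedBall_mul_I hσ hb hcb hz)
  have hw_ne : ∀ z ∈ s, w z ≠ 0 := fun z hz h => by simpa [h] using hw_pos z hz
  have hderiv : ∀ z ∈ s,
      HasDerivAt (fun z => c * I - log (w z)) (2 * z / b / w z) z := fun z hz => by
    have hw : HasDerivAt w (-(2 * z / b)) z := by
      simpa using ((hasDerivAt_pow 2 z).div_const (b : ℂ)).const_sub σ
    exact ((hw.clog (mem_slitPlane_iff.mpr (.inl (hw_pos z hz)))).const_sub (c * I)).congr_deriv
      (by ring)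
  have hbound : ∀ z ∈ s, ‖2 * z / b / w z‖₊ ≤ 1 / 2 := fun z hz => by
    rw [← NNReal.coe_le_coe, coe_nnnorm]
    exact norm_two_mul_div_div_sub_sq_div_le_of_mem_closedBall_mul_I hσ hb hc hcb hz
  have hmaps : MapsTo (fun z => c * I - log (w z)) s s := fun z hz => by
    rw [mem_closedBall_iff_norm, sub_sub_cancel_left, norm_neg]
    exact norm_log_sub_sq_div_le_of_mem_closedBall_mul_I hσ hb hcb hlog hz
  obtain ⟨z, hz, hfix⟩ := exists_fixedPoint_of_nnnorm_hasDerivWithin_le (by norm_num)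
    (convex_closedBall _ _) isClosed_closedBall (nonempty_closedBall.mpr (by linarith))
    (fun z hz => (hderiv z hz).hasDerivWithinAt) hbound hmaps
  have hlog_eq : c * I - z = log (w z) := by linear_combination hfix
  exact ⟨z, hz, by rw [hlog_eq, exp_log (hw_ne z hz)]⟩

end ClosedBall

theorem eventually_log_one_add_two_mul_sq_div_add_two_le {b : ℝ} (hb : 0 < b) :
    ∀ᶠ c in atTop, Real.log (1 + 2 * c ^ 2 / b) + 2 ≤ c / 4 := by
  filter_upwards [Real.isLittleO_log_id_atTop.bound (by norm_num : (0 : ℝ) < 1 / 16),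
    eventually_ge_atTop 1, eventually_ge_atTop (8 * (Real.log (1 + 2 / b) + 2))]
    with c hlogc hc hc'
  have hlogc' : Real.log c ≤ c / 16 := by
    simpa [Real.norm_of_nonneg (zero_le_one.trans hc), div_eq_inv_mul] using
      (le_abs_self _).trans hlogc
  have hsplit : 1 + 2 * c ^ 2 / b ≤ (1 + 2 / b) * c ^ 2 := by
    rw [add_mul, one_mul, div_mul_eq_mul_div]
    gcongr
    nlinarith
  calc Real.log (1 + 2 * c ^ 2 / b) + 2 ≤ Real.log ((1 + 2 / b) * c ^ 2) + 2 := by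
        gcongr
    _ = Real.log (1 + 2 / b) + 2 * Real.log c + 2 := by
        rw [Real.log_mul (by positivity) (by positivity), Real.log_pow]
        push_cast
        ring
    _ ≤ c / 4 := by linarith

theorem exists_ge_exp_mul_I_eq (θ C : ℝ) : ∃ c ≥ C, exp (c * I) = exp (θ * I) := by
  set N := ⌈C - θ⌉₊
  refine ⟨θ + 2 * Real.pi * N, ?_, ?_⟩
  · have hN : C - θ ≤ N := Nat.le_ceil _
    nlinarith [Real.pi_gt_three, N.cast_nonneg (α := ℝ)]
  · have : ((θ + 2 * Real.pi * N : ℝ) : ℂ) * I = θ * I + N * (2 * Real.pi * I) := by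
      push_cast
      ring
    rw [this, exp_add, exp_nat_mul_two_pi_mul_I, mul_one]

theorem exists_ne_zero_sq_eq_mul_one_sub_exp_neg {a : ℂ} (ha : a ≠ 0) :
    ∃ z ≠ 0, z ^ 2 = a * (1 - exp (-z)) := by
  have hb : 0 < ‖a‖ := norm_pos_iff.mpr ha
  obtain ⟨C, hC⟩ := eventually_atTop.mp ((eventually_ge_atTop (max 20 (4 * ‖a‖))).and
    (eventually_log_one_add_two_mul_sq_div_add_two_le hb))
  obtain ⟨c, hcC, hσ⟩ := exists_ge_exp_mul_I_eq a.arg C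
  obtain ⟨hcmax, hlog⟩ := hC c hcC
  have hc : 20 ≤ c := le_of_max_le_left hcmax
  have hcb : 4 * ‖a‖ ≤ c ^ 2 := by nlinarith [le_of_max_le_right hcmax]
  have hσa : ‖a‖ * exp (c * I) = a := by rw [hσ, norm_mul_exp_arg_mul_I]
  obtain ⟨z, hz, hfix⟩ :=
    exists_exp_sub_eq_sub_sq_div (norm_exp_ofReal_mul_I c).le hb hc hcb hlog
  refine ⟨z, norm_pos_iff.mp (by linarith [le_norm_of_mem_closedBall_mul_I hz]), ?_⟩
  rw [sub_eq_add_neg, exp_add] at hfix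
  have hb' : (‖a‖ : ℂ) ≠ 0 := ofReal_ne_zero.mpr hb.ne'
  field_simp at hfix
  linear_combination hfix + (1 - exp (-z)) * hσa

theorem mem_charRoots_iff (a : ℝ) {lam : ℂ} (h : lam ≠ 0) :
    lam ∈ charRoots a ↔ lam ^ 2 = a * (1 - exp (-lam)) := by
  have hfn : charFn a lam = (lam ^ 2 - a * (1 - exp (-lam))) / lam := by
    rw [charFn, integral_exp_mul_complex h]
    field_simp
    simp only [ofReal_zero, mul_zero, exp_zero, ofReal_neg, ofReal_one, mul_neg, mul_one]
  rw [charRoots, mem_ofPred_eq, hfn, div_eq_zero_iff, sub_eq_zero, or_iff_left h]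

/-- For `a ≠ 0` the set `Λ_a` is nonempty. -/
theorem charRoots_nonempty (a : ℝ) (ha : a ≠ 0) : (charRoots a).Nonempty := by
  obtain ⟨z, hz, hroot⟩ := exists_ne_zero_sq_eq_mul_one_sub_exp_neg (ofReal_ne_zero.mpr ha)
  exact ⟨z, (mem_charRoots_iff a hz).mpr hroot⟩
end

section
/- For every a ∈ ℝ \ {0}, the set Λ_a is countably infinite, consists of isolated points, and for each c ∈ ℝ the set {λ ∈ Λ_a : Re(λ) ≥ c} is finite; in particular v0(a) = sup{Re(λ) : λ ∈ Λ_a} < ∞. -/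
open MeasureTheory Topology Filter

/-! For `z ≠ 0` we have `z * h_a(z) = z ^ 2 - a + a * e^{-z}`, an entire function that is not
identically zero, so its zeros form a discrete set with finitely many points in each compact set.
A zero satisfies `‖z‖ ^ 2 ≤ |a| (1 + e^{-Re z})`, so the roots in a half-plane `Re z ≥ c` are
bounded, hence finite.

Infinitely many roots come from a contraction argument. Let `P` be a large multiple of `π`, even
or odd according to the sign of `a`, put `c = P i`, `D = a + P ^ 2` and
`z₀ = c - log (D / |a|)`. Then the characteristic equation becomes
`e^{z₀ - z} = 1 + (c ^ 2 - z ^ 2) / D`, and since `log P = o(P)` the map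
`z ↦ z₀ - Log (1 + (c ^ 2 - z ^ 2) / D)` is a contraction of the closed unit disc around `z₀`;
its fixed point is a root of imaginary part at least `P - 1`. -/

open Complex Metric
open scoped NNReal

noncomputable def charNumerator (a : ℝ) (z : ℂ) : ℂ := z ^ 2 - a + a * exp (-z)

section CharNumerator

variable (a : ℝ)

theorem charFn_zero : charFn a 0 = -a := by
  simp [charFn]

theorem mul_charFn {z : ℂ} (hz : z ≠ 0) : z * charFn a z = charNumerator a z := by
  rw [charFn, charNumerator, integral_exp_mul_complex hz]
  push_cast
  field_simp
  simp only [mul_zero, exp_zero]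
  ring

theorem charRoots_eq {a : ℝ} (ha : a ≠ 0) :
    charRoots a = {z | charNumerator a z = 0} \ {0} := by
  ext z
  rcases eq_or_ne z 0 with rfl | hz
  · simp [charRoots, charFn_zero, ha]
  · simp [charRoots, hz, ← mul_charFn a hz]

theorem differentiable_charNumerator : Differentiable ℂ (charNumerator a) := by
  unfold charNumerator
  fun_prop

variable {a}

theorem norm_sq_le_of_charNumerator_eq_zero {z : ℂ} (hz : charNumerator a z = 0) :
    ‖z‖ ^ 2 ≤ |a| * (1 + Real.exp (-z.re)) := by
  have hsq : z ^ 2 = a - a * exp (-z) := by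
    rw [charNumerator] at hz
    linear_combination hz
  calc ‖z‖ ^ 2 = ‖(a : ℂ) - a * exp (-z)‖ := by rw [← norm_pow, hsq]
    _ ≤ ‖(a : ℂ)‖ + ‖(a : ℂ)‖ * ‖exp (-z)‖ := by
      rw [← norm_mul]
      exact norm_sub_le _ _
    _ = |a| * (1 + Real.exp (-z.re)) := by
      rw [norm_real, Real.norm_eq_abs, norm_exp, neg_re]
      ring

variable (a)

theorem exists_charNumerator_ne_zero : ∃ z, charNumerator a z ≠ 0 := ⟨(2 * |a| + 1 : ℝ), fun h => by
  have := norm_sq_le_of_charNumerator_eq_zero h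
  rw [norm_real, Real.norm_eq_abs, ofReal_re, abs_of_pos (by positivity)] at this
  have : Real.exp (-(2 * |a| + 1)) ≤ 1 := Real.exp_le_one_iff.mpr (by linarith [abs_nonneg a])
  nlinarith [abs_nonneg a]⟩

theorem compl_charNumerator_zeros_mem_codiscrete :
    {z | charNumerator a z = 0}ᶜ ∈ codiscrete ℂ :=
  (analyticOnNhd_univ_iff_differentiable.mpr
    (differentiable_charNumerator a)).preimage_zero_mem_codiscrete
    (exists_charNumerator_ne_zero a).choose_spec

theorem isDiscrete_charNumerator_zeros : IsDiscrete {z | charNumerator a z = 0} :=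
  by simpa using isDiscrete_of_codiscreteWithin (compl_charNumerator_zeros_mem_codiscrete a)

theorem finite_charNumerator_zeros_inter {K : Set ℂ} (hK : IsCompact K) :
    ({z | charNumerator a z = 0} ∩ K).Finite := by
  rw [Set.inter_comm, ← compl_compl {z | charNumerator a z = 0}, ← Set.sdiff_eq]
  exact hK.finite_sdiff_of_mem_codiscreteWithin
    (codiscreteWithin_mono (Set.subset_univ K) (compl_charNumerator_zeros_mem_codiscrete a))

end CharNumerator

theorem finite_charRoots_inter_re_ge {a : ℝ} (ha : a ≠ 0) (c : ℝ) :
    {lam ∈ charRoots a | c ≤ lam.re}.Finite := by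
  refine (finite_charNumerator_zeros_inter a
    (isCompact_closedBall 0 (√(|a| * (1 + Real.exp (-c)))))).subset ?_
  rintro z ⟨hz, hc⟩
  rw [charRoots_eq ha] at hz
  refine ⟨hz.1, ?_⟩
  rw [mem_closedBall_zero_iff]
  apply Real.le_sqrt_of_sq_le
  refine (norm_sq_le_of_charNumerator_eq_zero hz.1).trans ?_
  gcongr

theorem exists_fixedPoint_of_lipschitzOnWith {α : Type*} [MetricSpace α] [CompleteSpace α]
    {s : Set α} (hs : IsClosed s) {x : α} (hx : x ∈ s) {K : ℝ≥0} (hK : K < 1) {f : α → α}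
    (hf : LipschitzOnWith K f s) (hfs : Set.MapsTo f s s) : ∃ y ∈ s, f y = y := by
  obtain ⟨y, hy, hfix, -⟩ := ContractingWith.exists_fixedPoint' hs.isComplete hfs
    ⟨hK, hf.mapsToRestrict hfs⟩ hx (edist_ne_top _ _)
  exact ⟨y, hy, hfix⟩

theorem exists_mem_closedBall_exp_sub_eq_one_add {g g' : ℂ → ℂ} {z₀ : ℂ}
    (hg : ∀ z ∈ closedBall z₀ 1, HasDerivAt g (g' z) z)
    (hg_le : ∀ z ∈ closedBall z₀ 1, ‖g z‖ ≤ 1 / 2)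
    (hg'_le : ∀ z ∈ closedBall z₀ 1, ‖g' z‖ ≤ 1 / 4) :
    ∃ z ∈ closedBall z₀ 1, exp (z₀ - z) = 1 + g z := by
  have hre : ∀ z ∈ closedBall z₀ 1, 1 / 2 ≤ (1 + g z).re := fun z hz => by
    have := (abs_le.mp ((abs_re_le_norm (g z)).trans (hg_le z hz))).1
    rw [add_re, one_re]
    linarith
  have hmaps : Set.MapsTo (fun z => z₀ - log (1 + g z)) (closedBall z₀ 1) (closedBall z₀ 1) :=
    fun z hz => by
      rw [mem_closedBall, dist_eq_norm, sub_sub_cancel_left, norm_neg]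
      linarith [norm_log_one_add_half_le_self (hg_le z hz), hg_le z hz]
  have hlip : LipschitzOnWith (1 / 2) (fun z => z₀ - log (1 + g z)) (closedBall z₀ 1) := by
    refine (convex_closedBall z₀ 1).lipschitzOnWith_of_nnnorm_hasDerivWithin_le
      (f' := fun z => -(g' z / (1 + g z))) (fun z hz => ?_) (fun z hz => ?_)
    · have hslit : 1 + g z ∈ slitPlane := Or.inl (by linarith [hre z hz])
      simpa [div_eq_inv_mul] using
        (((hg z hz).const_add 1).clog hslit).const_sub z₀ |>.hasDerivWithinAt
    · rw [← NNReal.coe_le_coe, coe_nnnorm, norm_neg, norm_div]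
      have := (hre z hz).trans (re_le_norm _)
      rw [div_le_iff₀ (by linarith)]
      push_cast
      linarith [hg'_le z hz]
  obtain ⟨z, hz, hfix⟩ := exists_fixedPoint_of_lipschitzOnWith isClosed_closedBall
    (mem_closedBall_self zero_le_one) (by norm_num) hlip hmaps
  refine ⟨z, hz, ?_⟩
  have hne : 1 + g z ≠ 0 := fun h => by linarith [hre z hz, congrArg re h, zero_re]
  rw [← exp_log hne]
  congr 1
  linear_combination hfix

/-- The large roots lie within distance `1` of `P i - rootShift a P`. -/
noncomputable def rootShift (a P : ℝ) : ℝ := Real.log ((a + P ^ 2) / |a|)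

theorem eventually_one_add_rootShift_le {a : ℝ} (ha : a ≠ 0) {ε : ℝ} (hε : 0 < ε) :
    ∀ᶠ P in atTop, 1 + rootShift a P ≤ ε * P := by
  have ha' : 0 < |a| := abs_pos.mpr ha
  filter_upwards [Real.isLittleO_log_id_atTop.bound (by positivity : 0 < ε / 4),
    eventually_ge_atTop (|a| + 1),
    eventually_ge_atTop (2 * (1 + Real.log (2 / |a|)) / ε)] with P hlog hPa hPC
  have hP : 1 ≤ P := by linarith [abs_nonneg a]
  have hP2 : |a| < P ^ 2 := by nlinarith
  have hlogP : Real.log P ≤ ε / 4 * P := by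
    simpa [abs_of_nonneg (Real.log_nonneg hP), abs_of_pos (by linarith : (0:ℝ) < P)] using hlog
  have hshift : rootShift a P ≤ Real.log (2 / |a|) + 2 * Real.log P := by
    rw [rootShift, two_mul, ← Real.log_mul (by positivity) (by positivity),
      ← Real.log_mul (by positivity) (by positivity)]
    gcongr
    · have := neg_abs_le a
      exact div_pos (by linarith) ha'
    · rw [div_mul_eq_mul_div]
      gcongr
      linarith [le_abs_self a]
  rw [div_le_iff₀ hε] at hPC
  linarith

theorem charNumerator_eq_zero_of_exp_eq {a P : ℝ} (ha : a ≠ 0) (hD : |a| ≤ a + P ^ 2)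
    (hsign : exp (-(P * I)) * |a| = a) {z : ℂ}
    (hz : exp (P * I - rootShift a P - z) = 1 + ((P * I) ^ 2 - z ^ 2) / (a + P ^ 2 : ℝ)) :
    charNumerator a z = 0 := by
  have ha' : 0 < |a| := abs_pos.mpr ha
  have ha0 : ((|a| : ℝ) : ℂ) ≠ 0 := ofReal_ne_zero.mpr ha'.ne'
  have hD0 : ((a + P ^ 2 : ℝ) : ℂ) ≠ 0 := ofReal_ne_zero.mpr (by linarith)
  have hexp : exp (-z) =
      exp (-(P * I)) * ((a + P ^ 2) / |a| : ℝ) * (1 + ((P * I) ^ 2 - z ^ 2) / (a + P ^ 2 : ℝ)) := by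
    rw [← hz, ← Real.exp_log (div_pos (by linarith) ha' : 0 < (a + P ^ 2) / |a|), ofReal_exp,
      ← rootShift, ← exp_add, ← exp_add]
    ring_nf
  have haE : (a : ℂ) * exp (-(P * I)) = |a| := mul_right_cancel₀ ha0 <| by
    have hsq : ((|a| : ℝ) : ℂ) ^ 2 = (a : ℂ) ^ 2 := by exact_mod_cast sq_abs a
    linear_combination (a : ℂ) * hsign - hsq
  have hroot : (a : ℂ) * exp (-z) = a - z ^ 2 := by
    rw [hexp, ← mul_assoc, ← mul_assoc, haE, ofReal_div, mul_div_cancel₀ _ ha0, mul_add, mul_one,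
      mul_div_cancel₀ _ hD0, mul_pow, I_sq]
    push_cast
    ring
  rw [charNumerator]
  linear_combination hroot

theorem exists_charNumerator_eq_zero_mem_closedBall {a P : ℝ} (ha : a ≠ 0)
    (hP : 2 * |a| + 9 ≤ P) (hshift : 1 + rootShift a P ≤ P / 8)
    (hsign : exp (-(P * I)) * |a| = a) :
    ∃ z ∈ closedBall (P * I - rootShift a P) 1, charNumerator a z = 0 := by
  set L := 1 + rootShift a P
  set D := a + P ^ 2
  set c : ℂ := P * I
  have ha' : 0 < |a| := abs_pos.mpr ha
  have hD : |a| ≤ D := by nlinarith [neg_abs_le a]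
  have hD0 : 0 < D := by linarith
  have hDnorm : ‖(D : ℂ)‖ = D := by rw [norm_real, Real.norm_eq_abs, abs_of_pos hD0]
  have hshift0 : 0 ≤ rootShift a P := Real.log_nonneg ((one_le_div ha').mpr hD)
  have hc : ‖c‖ = P := by simp [c, abs_of_nonneg (by linarith [abs_nonneg a] : 0 ≤ P)]
  have hLD : L * (L + 2 * P) ≤ D / 2 := by
    nlinarith [mul_le_mul hshift (by linarith : L + 2 * P ≤ P / 8 + 2 * P) (by linarith)
      (by linarith), neg_abs_le a]
  have hLD' : 8 * (L + P) ≤ D := by nlinarith [neg_abs_le a]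
  have hnear : ∀ z ∈ closedBall (c - rootShift a P) 1, ‖z - c‖ ≤ L := fun z hz => by
    rw [mem_closedBall, dist_eq_norm] at hz
    calc ‖z - c‖ = ‖(z - (c - rootShift a P)) - rootShift a P‖ := by ring_nf
      _ ≤ 1 + rootShift a P := by
        refine (norm_sub_le _ _).trans (add_le_add hz ?_)
        rw [norm_real, Real.norm_eq_abs, abs_of_nonneg hshift0]
  obtain ⟨z, hz, hexp⟩ := exists_mem_closedBall_exp_sub_eq_one_add
    (g := fun z => (c ^ 2 - z ^ 2) / D) (g' := fun z => -(2 * z) / D)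
    (fun z _ => by simpa using ((hasDerivAt_pow 2 z).const_sub (c ^ 2)).div_const (D : ℂ))
    (fun z hz => by
      have hcz : ‖c + z‖ ≤ L + 2 * P := calc
        ‖c + z‖ = ‖(z - c) + 2 * c‖ := by ring_nf
        _ ≤ L + 2 * P := (norm_add_le _ _).trans (by simp [hc, hnear z hz])
      rw [norm_div, hDnorm, div_le_iff₀ hD0, sq_sub_sq, norm_mul, norm_sub_rev]
      nlinarith [mul_le_mul (hnear z hz) hcz (norm_nonneg _) (by linarith)])
    (fun z hz => by
      have hz' : ‖z‖ ≤ L + P := calc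
        ‖z‖ = ‖(z - c) + c‖ := by ring_nf
        _ ≤ L + P := (norm_add_le _ _).trans (by rw [hc]; linarith [hnear z hz])
      rw [norm_div, hDnorm, div_le_iff₀ hD0, norm_neg, norm_mul]
      norm_num
      linarith)
  exact ⟨z, hz, charNumerator_eq_zero_of_exp_eq ha hD hsign hexp⟩

theorem exists_mem_charRoots_norm_gt {a : ℝ} (ha : a ≠ 0) (R : ℝ) :
    ∃ z ∈ charRoots a, R < ‖z‖ := by
  obtain ⟨θ, hθ⟩ : ∃ θ : ℝ, exp (-(θ * I)) * |a| = a := by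
    rcases ha.lt_or_gt with h | h
    · exact ⟨Real.pi, by simp [abs_of_neg h, exp_neg]⟩
    · exact ⟨0, by simp [abs_of_pos h]⟩
  have hsign : ∀ k : ℕ, exp (-((θ + 2 * Real.pi * k : ℝ) * I)) * |a| = a := fun k => by
    rw [← hθ, show -(((θ + 2 * Real.pi * k : ℝ) : ℂ) * I) = -(θ * I) - k * (2 * Real.pi * I) by
      push_cast; ring, exp_sub, exp_nat_mul_two_pi_mul_I, div_one]
  have hP : Tendsto (fun k : ℕ => θ + 2 * Real.pi * k) atTop atTop :=
    tendsto_atTop_add_const_left _ _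
      (tendsto_natCast_atTop_atTop.const_mul_atTop (by positivity))
  obtain ⟨k, hshift, hk⟩ := (hP.eventually ((eventually_one_add_rootShift_le ha
    (by norm_num : (0 : ℝ) < 1 / 8)).and (eventually_ge_atTop (2 * |a| + 9 + |R|)))).exists
  obtain ⟨z, hz, hroot⟩ := exists_charNumerator_eq_zero_mem_closedBall ha
    (by linarith [abs_nonneg R]) (by linarith) (hsign k)
  set P := θ + 2 * Real.pi * k
  have him : P - 1 ≤ z.im := by
    rw [mem_closedBall, dist_eq_norm] at hz
    have := (abs_le.mp ((abs_im_le_norm _).trans hz)).1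
    simp only [sub_im, mul_im, ofReal_re, I_im, ofReal_im, I_re] at this
    linarith
  refine ⟨z, charRoots_eq ha ▸ ⟨hroot, ?_⟩, ?_⟩
  · rintro rfl
    simp only [zero_im] at him
    linarith [abs_nonneg a, abs_nonneg R]
  · linarith [abs_nonneg a, le_abs_self R, (le_abs_self z.im).trans (abs_im_le_norm z)]

/-- For `a ≠ 0`: `Λ_a` is countably infinite, consists of isolated points, for each
`c ∈ ℝ` the set `{λ ∈ Λ_a : Re λ ≥ c}` is finite; in particular the set of real parts
of elements of `Λ_a` is bounded above (i.e. `v₀(a) < ∞`). -/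
theorem charRoots_structure (a : ℝ) (ha : a ≠ 0) :
    (charRoots a).Countable ∧
    (charRoots a).Infinite ∧
    (∀ lam ∈ charRoots a, 𝓝[charRoots a \ {lam}] lam = ⊥) ∧
    (∀ c : ℝ, {lam ∈ charRoots a | c ≤ lam.re}.Finite) ∧
    BddAbove (Complex.re '' charRoots a) := by
  have hdisc : IsDiscrete (charRoots a) :=
    (isDiscrete_charNumerator_zeros a).mono (charRoots_eq ha ▸ Set.sdiff_subset)
  have hfin := finite_charRoots_inter_re_ge ha
  refine ⟨(HereditarilyLindelofSpace.isLindelof _).countable_of_isDiscrete hdisc,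
    fun h => ?_, fun lam hlam => ?_, hfin, ?_⟩
  · obtain ⟨R, hR⟩ := (h.image (‖·‖)).bddAbove
    obtain ⟨z, hz, hRz⟩ := exists_mem_charRoots_norm_gt ha R
    exact (hR ⟨z, hz, rfl⟩).not_gt hRz
  · rw [Set.sdiff_eq_compl_inter, nhdsWithin_inter']
    exact isDiscrete_iff_nhdsNE.mp hdisc lam hlam
  · obtain ⟨M, hM⟩ := ((hfin 0).image re).bddAbove
    refine ⟨max M 0, ?_⟩
    rintro _ ⟨z, hz, rfl⟩
    by_cases h : 0 ≤ z.re
    · exact le_max_of_le_left (hM ⟨z, ⟨hz, h⟩, rfl⟩)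
    · exact le_max_of_le_right (by linarith)
end

section
/- If a ∈ (0, ∞), then v0(a) > 0, the real number v0(a) belongs to Λ_a and is a simple zero of h_a (i.e. h_a'(v0(a)) ≠ 0), v0(a) is the only element of Λ_a with real part equal to v0(a), and v1(a) := sup{Re(λ) : λ ∈ Λ_a, Re(λ) < v0(a)} < 0, i.e. every root other than v0(a) has strictly negative real part bounded away from 0. -/
open MeasureTheory

/-- `v₀(a) = sup{Re λ : λ ∈ Λ_a}`. -/
noncomputable def v0 (a : ℝ) : ℝ := sSup (Complex.re '' charRoots a)

/-- `v₁(a) = sup{Re λ : λ ∈ Λ_a, Re λ < v₀(a)}`. -/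
noncomputable def v1 (a : ℝ) : ℝ :=
  sSup {x : ℝ | ∃ lam ∈ charRoots a, lam.re = x ∧ x < v0 a}

/-!
A root satisfies `λ = a ∫_{-1}^0 e^{λu} du`, hence `|λ| ≤ φ(Re λ)` with the antitone
`φ x = a ∫_{-1}^0 e^{xu} du`. The positive fixed point `x` of `φ` is a root, and a root with
`Re λ ≥ x` has `|λ| ≤ φ(x) = x ≤ Re λ`, so it is `x` itself: `v₀(a) = x`. Combining the real and
imaginary parts of `λ² = a (1 - e^{-λ})` shows that nonreal roots have `Re λ < 0`; since they also
have `|Im λ| > π`, compactness bounds their real parts away from `0`. Such roots exist (a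
contraction argument), so `v₁(a)` is the supremum of a nonempty set.
-/

open Complex

lemma intervalIntegral_exp_mul {z : ℂ} (hz : z ≠ 0) :
    ∫ u in (-1:ℝ)..0, exp (z * u) = (1 - exp (-z)) / z := by
  rw [integral_exp_mul_complex hz]
  simp

lemma charFn_mul_self (a : ℝ) (z : ℂ) : charFn a z * z = z ^ 2 - a * (1 - exp (-z)) := by
  rcases eq_or_ne z 0 with rfl | hz
  · simp
  · rw [charFn, intervalIntegral_exp_mul hz]
    field_simp

lemma sq_eq_of_mem_charRoots {a : ℝ} {z : ℂ} (hz : z ∈ charRoots a) :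
    z ^ 2 = a * (1 - exp (-z)) := by
  rw [← sub_eq_zero, ← charFn_mul_self, hz.out, zero_mul]

lemma mem_charRoots_of_sq_eq {a : ℝ} {z : ℂ} (hz : z ≠ 0) (h : z ^ 2 = a * (1 - exp (-z))) :
    z ∈ charRoots a := by
  have := charFn_mul_self a z
  rw [h, sub_self, mul_eq_zero] at this
  exact this.resolve_right hz

lemma norm_le_of_mem_charRoots {a : ℝ} (ha : 0 ≤ a) {z : ℂ} (hz : z ∈ charRoots a) :
    ‖z‖ ≤ a * ∫ u in (-1:ℝ)..0, Real.exp (z.re * u) := by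
  have hz' : z = a * ∫ u in (-1:ℝ)..0, exp (z * u) := sub_eq_zero.1 hz
  calc ‖z‖ = a * ‖∫ u in (-1:ℝ)..0, exp (z * u)‖ := by
        rw [hz', norm_mul, norm_real, Real.norm_of_nonneg ha, ← hz']
    _ ≤ a * ∫ u in (-1:ℝ)..0, ‖exp (z * u)‖ := by
        gcongr
        exact intervalIntegral.norm_integral_le_integral_norm (by norm_num)
    _ = a * ∫ u in (-1:ℝ)..0, Real.exp (z.re * u) := by
        simp [norm_exp]

lemma ofReal_mem_charRoots_iff {a x : ℝ} :
    (x : ℂ) ∈ charRoots a ↔ x = a * ∫ u in (-1:ℝ)..0, Real.exp (x * u) := by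
  have : charFn a x = ((x - a * ∫ u in (-1:ℝ)..0, Real.exp (x * u) : ℝ) : ℂ) := by
    simp only [charFn, ofReal_sub, ofReal_mul, ← intervalIntegral.integral_ofReal, ofReal_exp]
  rw [charRoots, Set.mem_ofPred_eq, this, ofReal_eq_zero, sub_eq_zero]

lemma antitone_intervalIntegral_exp_mul :
    Antitone fun x : ℝ => ∫ u in (-1:ℝ)..0, Real.exp (x * u) := by
  intro x y hxy
  refine intervalIntegral.integral_mono_on (by norm_num)
    ((by fun_prop : Continuous _).intervalIntegrable _ _)
    ((by fun_prop : Continuous _).intervalIntegrable _ _) ?_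
  intro u hu
  exact Real.exp_le_exp.2 (by nlinarith [hu.2])

lemma exists_pos_ofReal_mem_charRoots {a : ℝ} (ha : 0 < a) :
    ∃ x : ℝ, 0 < x ∧ (x : ℂ) ∈ charRoots a := by
  set F : ℝ → ℝ := fun x => x - a * ∫ u in (-1:ℝ)..0, Real.exp (x * u)
  have hF0 : F 0 = -a := by simp [F]
  have hFa : 0 ≤ F a := by
    have : (∫ u in (-1:ℝ)..0, Real.exp (a * u)) ≤ 1 := by
      simpa using antitone_intervalIntegral_exp_mul ha.le
    simp only [F]
    nlinarith
  obtain ⟨x, hx, hFx⟩ := intermediate_value_Icc ha.le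
    (by fun_prop : Continuous F).continuousOn (show (0:ℝ) ∈ Set.Icc (F 0) (F a) by
      rw [hF0]; exact ⟨by linarith, hFa⟩)
  refine ⟨x, lt_of_le_of_ne hx.1 ?_, ofReal_mem_charRoots_iff.2 (sub_eq_zero.1 hFx)⟩
  rintro rfl
  linarith

section RealRoot

variable {a x : ℝ} {z : ℂ}

lemma eq_of_mem_charRoots_of_le_re (ha : 0 ≤ a) (hx : (x : ℂ) ∈ charRoots a)
    (hz : z ∈ charRoots a) (hxz : x ≤ z.re) : z = x := by
  have hnorm : ‖z‖ ≤ x := by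
    calc ‖z‖ ≤ a * ∫ u in (-1:ℝ)..0, Real.exp (z.re * u) := norm_le_of_mem_charRoots ha hz
      _ ≤ a * ∫ u in (-1:ℝ)..0, Real.exp (x * u) :=
          mul_le_mul_of_nonneg_left (antitone_intervalIntegral_exp_mul hxz) ha
      _ = x := (ofReal_mem_charRoots_iff.1 hx).symm
  have hre : z.re = ‖z‖ := le_antisymm (re_le_norm z) (hnorm.trans hxz)
  obtain ⟨-, him⟩ := Complex.nonneg_iff.1 (re_eq_norm.1 hre)
  apply Complex.ext <;> simp only [ofReal_re, ofReal_im] <;> linarith [re_le_norm z]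

lemma re_lt_of_mem_charRoots (ha : 0 ≤ a) (hx : (x : ℂ) ∈ charRoots a)
    (hz : z ∈ charRoots a) (hne : z ≠ x) : z.re < x :=
  lt_of_not_ge fun hxz => hne (eq_of_mem_charRoots_of_le_re ha hx hz hxz)

lemma im_ne_zero_of_mem_charRoots (ha : 0 ≤ a) (hx : (x : ℂ) ∈ charRoots a)
    (hz : z ∈ charRoots a) (hne : z ≠ x) : z.im ≠ 0 := by
  intro him
  have hzre : z = z.re := Complex.ext rfl (by simpa using him)
  have hlt := re_lt_of_mem_charRoots ha hx hz hne
  rw [hzre] at hz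
  have := eq_of_mem_charRoots_of_le_re ha hz hx hlt.le
  exact hlt.ne (ofReal_injective this).symm

lemma v0_eq (ha : 0 ≤ a) (hx : (x : ℂ) ∈ charRoots a) : v0 a = x := by
  refine IsGreatest.csSup_eq ⟨⟨x, hx, rfl⟩, ?_⟩
  rintro _ ⟨z, hz, rfl⟩
  by_contra! hxz
  exact hxz.ne' (by rw [eq_of_mem_charRoots_of_le_re ha hx hz hxz.le, ofReal_re])

end RealRoot

lemma hasDerivAt_charFn_of_mem_charRoots {a : ℝ} {z : ℂ} (hz : z ∈ charRoots a)
    (hz0 : z ≠ 0) : HasDerivAt (charFn a) ((2 * z - a * exp (-z)) / z) z := by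
  have hev : (fun w => (w ^ 2 - a * (1 - exp (-w))) / w) =ᶠ[nhds z] charFn a := by
    filter_upwards [isOpen_ne.mem_nhds hz0] with w hw
    rw [← charFn_mul_self, mul_div_cancel_right₀ _ hw]
  have hP : HasDerivAt (fun w : ℂ => w ^ 2 - a * (1 - exp (-w))) (2 * z - a * exp (-z)) z := by
    refine ((hasDerivAt_pow 2 z).fun_sub
      (((hasDerivAt_neg z).cexp.const_sub 1).const_mul (a : ℂ))).congr_deriv ?_
    push_cast
    ring
  refine ((hP.div (hasDerivAt_id z) hz0).congr_of_eventuallyEq hev.symm).congr_deriv ?_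
  rw [id, ← charFn_mul_self, hz.out]
  field_simp
  ring

lemma deriv_charFn_ofReal_ne_zero {a x : ℝ} (hx0 : 0 < x) (hx : (x : ℂ) ∈ charRoots a) :
    deriv (charFn a) x ≠ 0 := by
  have hsq : x ^ 2 = a * (1 - Real.exp (-x)) := by
    exact_mod_cast sq_eq_of_mem_charRoots hx
  rw [(hasDerivAt_charFn_of_mem_charRoots hx (by exact_mod_cast hx0.ne')).deriv]
  have hlt : a * Real.exp (-x) < 2 * x := by
    have h1 : a * Real.exp (-x) * (Real.exp x - 1) = x ^ 2 := by
      rw [hsq, mul_sub, mul_assoc, ← Real.exp_add, neg_add_cancel, Real.exp_zero]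
      ring
    nlinarith [Real.add_one_le_exp x, Real.exp_pos (-x)]
  have : ((2 * x - a * Real.exp (-x)) / x : ℝ) ≠ 0 := by
    have : 0 < 2 * x - a * Real.exp (-x) := by linarith
    positivity
  exact_mod_cast this

lemma re_neg_of_mem_charRoots {a : ℝ} (ha : 0 ≤ a) {z : ℂ} (hz : z ∈ charRoots a)
    (him : z.im ≠ 0) : z.re < 0 := by
  have h := sq_eq_of_mem_charRoots hz
  have hre := congrArg re h
  have hi := congrArg im h
  simp only [sq, mul_re, mul_im, ofReal_re, ofReal_im, sub_re, sub_im, one_re, one_im,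
    exp_re, exp_im, neg_re, neg_im, Real.cos_neg, Real.sin_neg] at hre hi
  set x := z.re
  set y := z.im
  by_contra! hx
  have key : y ^ 2 * (x ^ 2 + y ^ 2) =
      a * (Real.exp (-x) * (x * (y * Real.sin y) + y ^ 2 * Real.cos y) - y ^ 2) := by
    linear_combination (x * y) * hi - y ^ 2 * hre
  have hsin : y * Real.sin y ≤ y ^ 2 := by
    have := Real.abs_sin_le_abs (x := y)
    calc y * Real.sin y ≤ |y| * |Real.sin y| := by rw [← abs_mul]; exact le_abs_self _
      _ ≤ |y| * |y| := by gcongr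
      _ = y ^ 2 := by rw [← sq, sq_abs]
  have hcos : y ^ 2 * Real.cos y ≤ y ^ 2 := by nlinarith [Real.cos_le_one y]
  have hexp : Real.exp (-x) * (1 + x) ≤ 1 := by
    rw [Real.exp_neg, inv_mul_le_iff₀ (Real.exp_pos x), mul_one, add_comm]
    exact Real.add_one_le_exp x
  have hbound : Real.exp (-x) * (x * (y * Real.sin y) + y ^ 2 * Real.cos y) ≤ y ^ 2 := by
    calc _ ≤ Real.exp (-x) * (x * y ^ 2 + y ^ 2) := by gcongr
      _ = Real.exp (-x) * (1 + x) * y ^ 2 := by ring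
      _ ≤ y ^ 2 := by nlinarith [sq_nonneg y]
  have hy : 0 < y ^ 2 * (x ^ 2 + y ^ 2) := by positivity
  nlinarith

lemma pi_lt_abs_im_of_mem_charRoots {a : ℝ} (ha : 0 ≤ a) {z : ℂ} (hz : z ∈ charRoots a)
    (him : z.im ≠ 0) : Real.pi < |z.im| := by
  have hz' : z = a * ∫ u in (-1:ℝ)..0, exp (z * u) := sub_eq_zero.1 hz
  have hint : z.im = a * ∫ u in (-1:ℝ)..0, Real.exp (z.re * u) * Real.sin (z.im * u) := by
    conv_lhs => rw [hz']
    rw [im_ofReal_mul, ← RCLike.im_to_complex,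
      ← intervalIntegral.intervalIntegral_im ((by fun_prop : Continuous _).intervalIntegrable _ _)]
    simp [exp_im, mul_re, mul_im]
  by_contra! hle
  rw [abs_le] at hle
  have hsign : ∀ u ∈ Set.Icc (-1:ℝ) 0, z.im * Real.sin (z.im * u) ≤ 0 := by
    rintro u ⟨hu1, hu0⟩
    rcases le_total 0 z.im with hy | hy
    · exact mul_nonpos_of_nonneg_of_nonpos hy
        (Real.sin_nonpos_of_nonpos_of_neg_pi_le (by nlinarith) (by nlinarith))
    · exact mul_nonpos_of_nonpos_of_nonneg hy
        (Real.sin_nonneg_of_nonneg_of_le_pi (by nlinarith) (by nlinarith))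
  have hnonpos : z.im * z.im ≤ 0 := by
    calc z.im * z.im
        = a * ∫ u in (-1:ℝ)..0, Real.exp (z.re * u) * (z.im * Real.sin (z.im * u)) := by
          nth_rw 2 [hint]
          rw [mul_left_comm, ← intervalIntegral.integral_const_mul]
          simp_rw [mul_left_comm z.im]
      _ ≤ 0 := by
          refine mul_nonpos_of_nonneg_of_nonpos ha ?_
          rw [← neg_nonneg, ← intervalIntegral.integral_neg]
          refine intervalIntegral.integral_nonneg (by norm_num) fun u hu => ?_
          nlinarith [hsign u hu, Real.exp_pos (z.re * u)]
  exact him (mul_self_eq_zero.1 (le_antisymm hnonpos (mul_self_nonneg _)))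

lemma isCompact_setOf_sq_eq_mul_one_sub_exp_neg {a : ℝ} (ha : 0 ≤ a) :
    IsCompact {z : ℂ | z ^ 2 = a * (1 - exp (-z)) ∧ -1 ≤ z.re} := by
  refine (isCompact_closedBall (0 : ℂ) (a + 2)).of_isClosed_subset
    ((isClosed_eq (by fun_prop) (by fun_prop)).inter
      (isClosed_le continuous_const continuous_re)) ?_
  rintro z ⟨hsq, hre⟩
  rw [mem_closedBall_zero_iff]
  have hexp : ‖exp (-z)‖ ≤ 3 := by
    rw [norm_exp, neg_re]
    exact (Real.exp_le_exp.2 (by linarith)).trans (Real.exp_one_lt_d9.le.trans (by norm_num))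
  have : ‖z‖ ^ 2 ≤ 4 * a := by
    calc ‖z‖ ^ 2 = a * ‖1 - exp (-z)‖ := by
          rw [← norm_pow, hsq, norm_mul, norm_real, Real.norm_of_nonneg ha]
      _ ≤ a * (‖(1 : ℂ)‖ + ‖exp (-z)‖) := by gcongr; exact norm_sub_le _ _
      _ ≤ 4 * a := by rw [norm_one]; nlinarith
  nlinarith [norm_nonneg z]

lemma exists_neg_bound_re_of_im_ne_zero {a : ℝ} (ha : 0 < a) :
    ∃ b < 0, ∀ z ∈ charRoots a, z.im ≠ 0 → z.re ≤ b := by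
  -- nonreal roots in the strip `-1 ≤ re` stay away from the real axis, so they form a compact set
  set R : Set ℂ :=
    {z | z ^ 2 = a * (1 - exp (-z)) ∧ -1 ≤ z.re} ∩ {z | Real.pi ≤ |z.im|}
  have hRc : IsCompact R := (isCompact_setOf_sq_eq_mul_one_sub_exp_neg ha.le).inter_right
    (isClosed_le continuous_const (continuous_abs.comp continuous_im))
  have hR : ∀ z ∈ charRoots a, z.im ≠ 0 → -1 < z.re → z ∈ R := fun z hz him hre =>
    ⟨⟨sq_eq_of_mem_charRoots hz, hre.le⟩, (pi_lt_abs_im_of_mem_charRoots ha.le hz him).le⟩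
  rcases R.eq_empty_or_nonempty with hempty | hne
  · refine ⟨-1, by norm_num, fun z hz him => ?_⟩
    by_contra! hlt
    simpa [hempty] using hR z hz him hlt
  · obtain ⟨μ, ⟨⟨hsq, hμre⟩, hμpi⟩, hmax⟩ := hRc.exists_isMaxOn hne continuous_re.continuousOn
    have hμim : μ.im ≠ 0 := fun h => by
      rw [Set.mem_ofPred_eq, h, abs_zero] at hμpi
      exact Real.pi_pos.not_ge hμpi
    refine ⟨μ.re, re_neg_of_mem_charRoots ha.le
      (mem_charRoots_of_sq_eq (fun h => hμim (by rw [h, zero_im])) hsq) hμim, fun z hz him => ?_⟩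
    rcases le_or_gt z.re (-1) with hle | hlt
    · exact hle.trans hμre
    · exact hmax (hR z hz him hlt)

lemma exists_fixedPoint_of_lipschitzOnWith_closedBall {α : Type*} [MetricSpace α]
    [CompleteSpace α] {T : α → α} {c : α} {r : ℝ} {q : NNReal} (hq : q < 1)
    (hT : LipschitzOnWith q T (Metric.closedBall c r)) (hc : dist (T c) c ≤ (1 - q) * r) :
    ∃ z ∈ Metric.closedBall c r, T z = z := by
  have hr : 0 ≤ r := nonneg_of_mul_nonneg_right (dist_nonneg.trans hc) (sub_pos.2 hq)
  have hcr : c ∈ Metric.closedBall c r := Metric.mem_closedBall_self hr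
  have hmaps : Set.MapsTo T (Metric.closedBall c r) (Metric.closedBall c r) := fun z hz => by
    calc dist (T z) c ≤ dist (T z) (T c) + dist (T c) c := dist_triangle _ _ _
      _ ≤ q * r + (1 - q) * r := by
          gcongr
          exact (hT.dist_le_mul z hz c hcr).trans (by gcongr; exact hz)
      _ = r := by ring
  obtain ⟨z, hz, hfix, -⟩ := ContractingWith.exists_fixedPoint'
    Metric.isClosed_closedBall.isComplete hmaps ⟨hq, hT.mapsToRestrict hmaps⟩ hcr
    (edist_ne_top _ _)
  exact ⟨z, hz, hfix⟩

lemma exists_nat_log_one_add_sq_div_le {a : ℝ} (ha : 0 < a) :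
    ∃ k : ℕ, 16 ≤ 2 * Real.pi * k ∧
      8 * Real.log (1 + (2 * Real.pi * k) ^ 2 / a) ≤ 2 * Real.pi * k := by
  set C := 1 + 1 / a
  have hC : 0 < C := by positivity
  have hev : ∀ᶠ K in Filter.atTop, 16 ≤ K ∧ 8 * Real.log (1 + K ^ 2 / a) ≤ K := by
    filter_upwards [(Real.isLittleO_pow_exp_atTop (n := 16)).def (inv_pos.2 (pow_pos hC 8)),
      Filter.eventually_ge_atTop 16] with K hK h16
    refine ⟨h16, ?_⟩
    rw [Real.norm_of_nonneg (by positivity), Real.norm_of_nonneg (Real.exp_pos K).le,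
      inv_mul_eq_div, le_div_iff₀' (pow_pos hC 8)] at hK
    have h1 : 1 + K ^ 2 / a ≤ C * K ^ 2 := by
      have : 1 ≤ K ^ 2 := by nlinarith
      simp only [C]
      rw [add_mul, one_div_mul_eq_div]
      linarith
    rw [← Real.log_rpow (by positivity), Real.log_le_iff_le_exp (by positivity)]
    calc (1 + K ^ 2 / a) ^ (8:ℝ) = (1 + K ^ 2 / a) ^ 8 := by norm_cast
      _ ≤ (C * K ^ 2) ^ 8 := by gcongr
      _ = C ^ 8 * K ^ 16 := by ring
      _ ≤ Real.exp K := hK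
  exact ((tendsto_natCast_atTop_atTop.const_mul_atTop (by positivity)).eventually hev).exists

section FarRoot

variable {a K r : ℝ} {z : ℂ}

lemma abs_re_le_and_abs_im_add_le_of_mem_closedBall (hz : z ∈ Metric.closedBall (-(K * I)) r) :
    |z.re| ≤ r ∧ |z.im + K| ≤ r := by
  rw [Metric.mem_closedBall, dist_eq, sub_neg_eq_add] at hz
  exact ⟨by simpa using (abs_re_le_norm _).trans hz, by simpa using (abs_im_le_norm _).trans hz⟩

lemma sq_div_two_le_re_one_sub_sq_div (ha : 0 < a) (hz : z ∈ Metric.closedBall (-(K * I)) r)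
    (hr : 4 * r ≤ K) : K ^ 2 / (2 * a) ≤ (1 - z ^ 2 / a).re := by
  obtain ⟨hre, him⟩ := abs_re_le_and_abs_im_add_le_of_mem_closedBall hz
  rw [abs_le] at hre him
  have hr0 : 0 ≤ r := (abs_nonneg _).trans (abs_le.2 hre)
  have hre' : (1 - z ^ 2 / a).re = 1 + (z.im ^ 2 - z.re ^ 2) / a := by
    rw [sub_re, one_re, div_ofReal_re, sq, mul_re]
    ring
  rw [hre', div_le_iff₀ (by positivity)]
  have : K ^ 2 / 2 ≤ z.im ^ 2 - z.re ^ 2 := by nlinarith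
  field_simp
  nlinarith

lemma lipschitzOnWith_neg_log_one_sub_sq_div (ha : 0 < a) (hK : 16 ≤ K) (hr : 4 * r ≤ K) :
    LipschitzOnWith (1 / 2) (fun z : ℂ => -log (1 - z ^ 2 / a) - K * I)
      (Metric.closedBall (-(K * I)) r) := by
  refine Convex.lipschitzOnWith_of_nnnorm_hasDerivWithin_le (𝕜 := ℂ) (convex_closedBall _ _)
    (f' := fun z => (1 - z ^ 2 / a)⁻¹ * (2 * z / a)) (fun z hz => ?_) (fun z hz => ?_)
  · have hw := sq_div_two_le_re_one_sub_sq_div ha hz hr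
    have hslit : 1 - z ^ 2 / a ∈ slitPlane := Or.inl (lt_of_lt_of_le (by positivity) hw)
    have hdw : HasDerivAt (fun z : ℂ => 1 - z ^ 2 / a) (-(2 * z / a)) z := by
      refine ((hasDerivAt_pow 2 z).div_const (a : ℂ)).const_sub 1 |>.congr_deriv ?_
      push_cast
      ring
    refine (((hasDerivAt_log hslit).comp z hdw).neg.sub_const _).hasDerivWithinAt.congr_deriv ?_
    ring
  · have hw := sq_div_two_le_re_one_sub_sq_div ha hz hr
    have hw0 : 0 < K ^ 2 / (2 * a) := by positivity
    have hnorm : ‖z‖ ≤ 2 * K := by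
      calc ‖z‖ ≤ ‖z - -(K * I)‖ + ‖-(K * I : ℂ)‖ := norm_le_norm_sub_add _ _
        _ ≤ r + K := by
            gcongr
            · exact mem_closedBall_iff_norm.1 hz
            · simp [abs_of_nonneg (show (0:ℝ) ≤ K by linarith)]
        _ ≤ 2 * K := by nlinarith [dist_nonneg.trans hz]
    rw [← NNReal.coe_le_coe, coe_nnnorm, norm_mul, norm_inv, norm_div, norm_mul, norm_real,
      Real.norm_of_nonneg ha.le, RCLike.norm_ofNat]
    calc ‖1 - z ^ 2 / a‖⁻¹ * (2 * ‖z‖ / a) ≤ (K ^ 2 / (2 * a))⁻¹ * (2 * (2 * K) / a) := by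
          gcongr
          exact hw.trans (re_le_norm _)
      _ = 8 / K := by field_simp; ring
      _ ≤ ((1 / 2 : NNReal) : ℝ) := by
          rw [div_le_iff₀ (by linarith)]
          norm_num
          linarith

end FarRoot

-- A fixed point of `z ↦ -log (1 - z²/a) - 2πik` solves `e^{-z} = 1 - z²/a`; for large `k` this map
-- contracts a disc around `-2πik`.
lemma exists_mem_charRoots_im_neg {a : ℝ} (ha : 0 < a) : ∃ z ∈ charRoots a, z.im < 0 := by
  obtain ⟨k, hK, hL⟩ := exists_nat_log_one_add_sq_div_le ha
  set K := 2 * Real.pi * k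
  set L := Real.log (1 + K ^ 2 / a)
  have hL0 : 0 ≤ L := Real.log_nonneg (le_add_of_nonneg_right (by positivity))
  have hc : -log (1 - (-(K * I)) ^ 2 / a) - K * I = -L - K * I := by
    have : 1 - (-(K * I)) ^ 2 / a = ((1 + K ^ 2 / a : ℝ) : ℂ) := by
      push_cast
      linear_combination (-(K : ℂ) ^ 2 / a) * I_sq
    rw [this, ← ofReal_log (by positivity)]
  obtain ⟨z, hz, hfix⟩ := exists_fixedPoint_of_lipschitzOnWith_closedBall (r := 2 * L)
    (by norm_num) (lipschitzOnWith_neg_log_one_sub_sq_div ha hK (by linarith))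
    (by
      rw [hc, dist_eq]
      simp [abs_of_nonneg hL0]
      linarith)
  have him : z.im < 0 := by
    have := (abs_le.1 (abs_re_le_and_abs_im_add_le_of_mem_closedBall hz).2).2
    linarith
  refine ⟨z, mem_charRoots_of_sq_eq (fun h => by simp [h] at him) ?_, him⟩
  have hw : 1 - z ^ 2 / a ≠ 0 := fun h => by
    have := sq_div_two_le_re_one_sub_sq_div ha hz (by linarith)
    rw [h, zero_re] at this
    linarith [show 0 < K ^ 2 / (2 * a) by positivity]
  have hexp : exp (-z) = 1 - z ^ 2 / a := by
    have : -z = log (1 - z ^ 2 / a) + k * (2 * Real.pi * I) := by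
      push_cast [K] at hfix
      linear_combination hfix
    rw [this, exp_add, exp_nat_mul_two_pi_mul_I, exp_log hw, mul_one]
  rw [hexp, sub_sub_cancel, mul_div_cancel₀ _ (ofReal_ne_zero.2 ha.ne')]

/-- If `a > 0` then `v₀(a) > 0`, `v₀(a)` is a simple root of `h_a`, it is the unique root
with real part `v₀(a)`, and `v₁(a) < 0`: every other root has strictly negative real part
bounded away from `0`. -/
theorem charRoots_pos_case (a : ℝ) (ha : 0 < a) :
    0 < v0 a ∧
    ((v0 a : ℂ) ∈ charRoots a) ∧
    deriv (charFn a) (v0 a : ℂ) ≠ 0 ∧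
    (∀ lam ∈ charRoots a, lam.re = v0 a → lam = (v0 a : ℂ)) ∧
    v1 a < 0 ∧
    (∀ lam ∈ charRoots a, lam ≠ (v0 a : ℂ) → lam.re ≤ v1 a) := by
  obtain ⟨x, hx0, hx⟩ := exists_pos_ofReal_mem_charRoots ha
  obtain ⟨b, hb, hbound⟩ := exists_neg_bound_re_of_im_ne_zero ha
  obtain ⟨μ, hμ, hμim⟩ := exists_mem_charRoots_im_neg ha
  have hv0 : v0 a = x := v0_eq ha.le hx
  have hmem : ∀ z ∈ charRoots a, z ≠ x →
      z.re ∈ {r : ℝ | ∃ z ∈ charRoots a, z.re = r ∧ r < v0 a} := fun z hz hne =>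
    ⟨z, hz, rfl, hv0 ▸ re_lt_of_mem_charRoots ha.le hx hz hne⟩
  have hbdd : ∀ r ∈ {r : ℝ | ∃ z ∈ charRoots a, z.re = r ∧ r < v0 a}, r ≤ b := by
    rintro _ ⟨z, hz, rfl, hlt⟩
    refine hbound z hz (im_ne_zero_of_mem_charRoots ha.le hx hz fun h => hlt.ne ?_)
    rw [h, hv0, ofReal_re]
  have hv1 : v1 a ≤ b :=
    csSup_le ⟨_, hmem μ hμ fun h => hμim.ne (by rw [h, ofReal_im])⟩ hbdd
  rw [hv0]
  exact ⟨hx0, hx, deriv_charFn_ofReal_ne_zero hx0 hx,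
    fun z hz hre => eq_of_mem_charRoots_of_le_re ha.le hx hz hre.ge, hv1.trans_lt hb,
    fun z hz hne => le_csSup ⟨b, hbdd⟩ (hmem z hz hne)⟩
end

section
/- Let y : [0, ∞) → ℝ and x₀ : [−1, 0] → ℝ be continuous functions, and define Z(t) := ∫_{−1}^0 ∫_u^0 y(t + u − s) x₀(s) ds du for t ≥ 1. Then for every T ≥ 1, ∫_1^T Z(t)² dt ≤ (∫_{−1}^0 x₀(s)² ds) · (∫_0^T y(v)² dv). -/
open MeasureTheory

/-- Cauchy–Schwarz for interval integrals of continuous functions. -/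
lemma cs_interval_aux {f g : ℝ → ℝ} (hf : Continuous f) (hg : Continuous g)
    {a b : ℝ} (hab : a ≤ b) :
    (∫ x in a..b, f x * g x) ^ 2 ≤ (∫ x in a..b, f x ^ 2) * (∫ x in a..b, g x ^ 2) := by
  set A := ∫ x in a..b, f x ^ 2 with hA
  set B := ∫ x in a..b, f x * g x with hB
  set C := ∫ x in a..b, g x ^ 2 with hC
  have key : ∀ lam : ℝ, 0 ≤ A * (lam * lam) + (2 * B) * lam + C := by
    intro lam
    have h2 : (∫ x in a..b, (lam * f x + g x) ^ 2)
        = lam ^ 2 * A + 2 * lam * B + C := by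
      have h1 : (fun x => (lam * f x + g x) ^ 2)
          = fun x => lam ^ 2 * f x ^ 2 + (2 * lam * (f x * g x) + g x ^ 2) := by
        funext x; ring
      rw [h1, intervalIntegral.integral_add, intervalIntegral.integral_add,
        intervalIntegral.integral_const_mul, intervalIntegral.integral_const_mul]
      · ring
      · exact (continuous_const.mul ((hf.mul hg))).intervalIntegrable a b
      · exact (hg.pow 2).intervalIntegrable a b
      · exact (continuous_const.mul (hf.pow 2)).intervalIntegrable a b
      · exact ((continuous_const.mul (hf.mul hg)).add (hg.pow 2)).intervalIntegrable a b
    have h0 : 0 ≤ ∫ x in a..b, (lam * f x + g x) ^ 2 :=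
      intervalIntegral.integral_nonneg hab (fun x _ => sq_nonneg _)
    rw [h2] at h0
    nlinarith [h0]
  have hd := discrim_le_zero key
  rw [discrim] at hd
  nlinarith [hd]

/-- Cauchy–Schwarz type bound: for continuous `y` on `[0,∞)` and `x₀` on `[−1,0]`, with
`Z(t) = ∫_{−1}^0 ∫_u^0 y(t+u−s) x₀(s) ds du`, one has
`∫_1^T Z(t)² dt ≤ (∫_{−1}^0 x₀(s)² ds) (∫_0^T y(v)² dv)` for each `T ≥ 1`. -/
theorem sq_integral_Z_le (y x₀ : ℝ → ℝ)
    (hy : ContinuousOn y (Set.Ici (0:ℝ)))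
    (hx₀ : ContinuousOn x₀ (Set.Icc (-1:ℝ) 0))
    (Z : ℝ → ℝ)
    (hZ : ∀ t : ℝ, 1 ≤ t → Z t = ∫ u in (-1:ℝ)..0, ∫ s in u..0, y (t + u - s) * x₀ s)
    (T : ℝ) (hT : 1 ≤ T) :
    (∫ t in (1:ℝ)..T, Z t ^ 2) ≤
      (∫ s in (-1:ℝ)..0, x₀ s ^ 2) * ∫ v in (0:ℝ)..T, y v ^ 2 := by
  -- clamped versions of y and x₀, continuous on all of ℝ
  set yc : ℝ → ℝ := fun v => y (max v 0) with hycdef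
  set xc : ℝ → ℝ := fun s => x₀ (max (-1) (min s 0)) with hxcdef
  have hyc : Continuous yc := by
    apply hy.comp_continuous (continuous_id.max continuous_const)
    intro v; exact le_max_right v 0
  have hxc : Continuous xc := by
    apply hx₀.comp_continuous (continuous_const.max (continuous_id.min continuous_const))
    intro s
    refine ⟨le_max_left _ _, max_le (by norm_num) (min_le_right _ _)⟩
  have hyeq : ∀ v : ℝ, 0 ≤ v → yc v = y v := by
    intro v hv; simp only [hycdef, max_eq_left hv]
  have hxeq : ∀ s : ℝ, s ∈ Set.Icc (-1:ℝ) 0 → xc s = x₀ s := by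
    intro s hs
    simp only [hxcdef, min_eq_left hs.2, max_eq_right hs.1]
  set A := ∫ s in (-1:ℝ)..0, xc s ^ 2 with hAdef
  set H : ℝ → ℝ := fun r => ∫ v in (0:ℝ)..r, yc v ^ 2 with hHdef
  have hHcont : Continuous H :=
    intervalIntegral.continuous_primitive (fun a b => (hyc.pow 2).intervalIntegrable a b) 0
  have hHmono : Monotone H := by
    intro a b hab
    have hsub : H b - H a = ∫ v in a..b, yc v ^ 2 :=
      intervalIntegral.integral_interval_sub_left
        ((hyc.pow 2).intervalIntegrable 0 b) ((hyc.pow 2).intervalIntegrable 0 a)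
    have : 0 ≤ ∫ v in a..b, yc v ^ 2 :=
      intervalIntegral.integral_nonneg hab (fun x _ => sq_nonneg _)
    linarith
  have hH0 : ∀ r : ℝ, 0 ≤ r → 0 ≤ H r := fun r hr =>
    intervalIntegral.integral_nonneg hr (fun x _ => sq_nonneg _)
  have hA0 : (0:ℝ) ≤ A :=
    intervalIntegral.integral_nonneg (by norm_num) (fun x _ => sq_nonneg _)
  have hAeq : (∫ s in (-1:ℝ)..0, x₀ s ^ 2) = A := by
    apply intervalIntegral.integral_congr
    intro s hs
    rw [Set.uIcc_of_le (by norm_num : (-1:ℝ) ≤ 0)] at hs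
    show x₀ s ^ 2 = xc s ^ 2
    rw [hxeq s hs]
  have hBeq : (∫ v in (0:ℝ)..T, y v ^ 2) = H T := by
    apply (intervalIntegral.integral_congr _).symm
    intro v hv
    rw [Set.uIcc_of_le (by linarith : (0:ℝ) ≤ T)] at hv
    show yc v ^ 2 = y v ^ 2
    rw [hyeq v hv.1]
  -- pointwise bound
  have key : ∀ t ∈ Set.Icc (1:ℝ) T, Z t ^ 2 ≤ A * (H t - H (t - 1)) := by
    rintro t ⟨ht1, htT⟩
    have hZt : Z t = ∫ u in (-1:ℝ)..0, ∫ s in u..0, yc (t + u - s) * xc s := by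
      rw [hZ t ht1]
      apply intervalIntegral.integral_congr
      intro u hu
      rw [Set.uIcc_of_le (by norm_num : (-1:ℝ) ≤ 0)] at hu
      apply intervalIntegral.integral_congr
      intro s hs
      rw [Set.uIcc_of_le hu.2] at hs
      show y (t + u - s) * x₀ s = yc (t + u - s) * xc s
      rw [hyeq (t + u - s) (by linarith [hu.1, hs.2]),
        hxeq s ⟨le_trans hu.1 hs.1, hs.2⟩]
    set F : ℝ → ℝ := fun u => ∫ s in u..0, yc (t + u - s) * xc s with hFdef
    have hFcont : Continuous F := by
      have hunc : Continuous (Function.uncurry fun (u : ℝ) (s : ℝ) =>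
          yc (t + u - s) * xc s) := by
        apply Continuous.mul
        · exact hyc.comp (by fun_prop)
        · exact hxc.comp continuous_snd
      have h1 : Continuous fun u => ∫ s in (0:ℝ)..u, yc (t + u - s) * xc s :=
        intervalIntegral.continuous_parametric_intervalIntegral_of_continuous hunc
          continuous_id
      have h2 : F = fun u => -(∫ s in (0:ℝ)..u, yc (t + u - s) * xc s) := by
        funext u
        rw [hFdef]
        exact intervalIntegral.integral_symm 0 u
      rw [h2]
      exact h1.neg
    have hHle : H (t - 1) ≤ H t := hHmono (by linarith)
    have hCnn : 0 ≤ A * (H t - H (t - 1)) := mul_nonneg hA0 (by linarith)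
    have hFb : ∀ u ∈ Set.Icc (-1:ℝ) 0, F u ^ 2 ≤ A * (H t - H (t - 1)) := by
      rintro u ⟨hu1, hu0⟩
      have cs := cs_interval_aux (f := fun s => yc (t + u - s)) (g := xc)
        (hyc.comp (by fun_prop)) hxc hu0
      have e1 : (∫ s in u..0, yc (t + u - s) ^ 2) = H t - H (t + u) := by
        have h := intervalIntegral.integral_comp_sub_left (a := u) (b := 0)
          (fun v => yc v ^ 2) (t + u)
        have h' : (∫ s in u..0, yc (t + u - s) ^ 2)
            = ∫ v in (t + u)..t, yc v ^ 2 := by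
          rw [h]; norm_num
        rw [h']
        exact (intervalIntegral.integral_interval_sub_left
          ((hyc.pow 2).intervalIntegrable 0 t)
          ((hyc.pow 2).intervalIntegrable 0 (t + u))).symm
      have e2 : (∫ s in u..0, xc s ^ 2) ≤ A :=
        intervalIntegral.integral_mono_interval hu1 hu0 le_rfl
          (Filter.Eventually.of_forall fun x => sq_nonneg _)
          ((hxc.pow 2).intervalIntegrable (-1) 0)
      have e3 : H t - H (t + u) ≤ H t - H (t - 1) := by
        have := hHmono (show t - 1 ≤ t + u by linarith)
        linarith
      have nn1 : 0 ≤ ∫ s in u..0, yc (t + u - s) ^ 2 :=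
        intervalIntegral.integral_nonneg hu0 (fun x _ => sq_nonneg _)
      have nn2 : 0 ≤ ∫ s in u..0, xc s ^ 2 :=
        intervalIntegral.integral_nonneg hu0 (fun x _ => sq_nonneg _)
      calc F u ^ 2 ≤ (∫ s in u..0, yc (t + u - s) ^ 2) * (∫ s in u..0, xc s ^ 2) := cs
        _ ≤ (H t - H (t - 1)) * A := by
            apply mul_le_mul (by rw [e1] at *; linarith) e2 nn2 (by linarith)
        _ = A * (H t - H (t - 1)) := by ring
    have hZb : |Z t| ≤ Real.sqrt (A * (H t - H (t - 1))) := by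
      rw [hZt]
      calc |∫ u in (-1:ℝ)..0, F u| ≤ ∫ u in (-1:ℝ)..0, |F u| :=
            intervalIntegral.abs_integral_le_integral_abs (by norm_num)
        _ ≤ ∫ u in (-1:ℝ)..0, Real.sqrt (A * (H t - H (t - 1))) := by
            apply intervalIntegral.integral_mono_on (by norm_num)
              (hFcont.abs.intervalIntegrable _ _) intervalIntegrable_const
            intro u hu
            have h1 : |F u| = Real.sqrt (F u ^ 2) := (Real.sqrt_sq_eq_abs _).symm
            rw [h1]
            exact Real.sqrt_le_sqrt (hFb u hu)
        _ = Real.sqrt (A * (H t - H (t - 1))) := by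
            rw [intervalIntegral.integral_const]; norm_num
    calc Z t ^ 2 = |Z t| ^ 2 := (sq_abs _).symm
      _ ≤ Real.sqrt (A * (H t - H (t - 1))) ^ 2 := by
          apply pow_le_pow_left₀ (abs_nonneg _) hZb
      _ = A * (H t - H (t - 1)) := Real.sq_sqrt hCnn
  -- main estimate
  rw [hAeq, hBeq]
  by_cases hint : IntervalIntegrable (fun t => Z t ^ 2) volume 1 T
  · have hCcont : Continuous fun t => A * (H t - H (t - 1)) := by
      apply continuous_const.mul
      exact hHcont.sub (hHcont.comp (by fun_prop))
    have step1 : (∫ t in (1:ℝ)..T, Z t ^ 2)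
        ≤ ∫ t in (1:ℝ)..T, A * (H t - H (t - 1)) :=
      intervalIntegral.integral_mono_on hT hint (hCcont.intervalIntegrable _ _) key
    have step2 : (∫ t in (1:ℝ)..T, A * (H t - H (t - 1)))
        = A * ∫ t in (1:ℝ)..T, (H t - H (t - 1)) :=
      intervalIntegral.integral_const_mul _ _
    have step3 : (∫ t in (1:ℝ)..T, (H t - H (t - 1)))
        = (∫ t in (1:ℝ)..T, H t) - (∫ t in (1:ℝ)..T, H (t - 1)) :=
      intervalIntegral.integral_sub (hHcont.intervalIntegrable _ _)
        ((hHcont.comp (by fun_prop)).intervalIntegrable _ _)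
    have step4 : (∫ t in (1:ℝ)..T, H (t - 1)) = ∫ t in (0:ℝ)..(T - 1), H t := by
      have h := intervalIntegral.integral_comp_sub_right (a := 1) (b := T) H 1
      simpa using h
    have a1 : (∫ t in (0:ℝ)..1, H t) + (∫ t in (1:ℝ)..T, H t)
        = ∫ t in (0:ℝ)..T, H t :=
      intervalIntegral.integral_add_adjacent_intervals
        (hHcont.intervalIntegrable _ _) (hHcont.intervalIntegrable _ _)
    have a2 : (∫ t in (0:ℝ)..(T - 1), H t) + (∫ t in (T - 1)..T, H t)
        = ∫ t in (0:ℝ)..T, H t :=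
      intervalIntegral.integral_add_adjacent_intervals
        (hHcont.intervalIntegrable _ _) (hHcont.intervalIntegrable _ _)
    have h01 : 0 ≤ ∫ t in (0:ℝ)..1, H t :=
      intervalIntegral.integral_nonneg (by norm_num) (fun r hr => hH0 r hr.1)
    have hlast : (∫ t in (T - 1)..T, H t) ≤ H T := by
      calc (∫ t in (T - 1)..T, H t) ≤ ∫ t in (T - 1)..T, H T :=
            intervalIntegral.integral_mono_on (by linarith)
              (hHcont.intervalIntegrable _ _) intervalIntegrable_const
              (fun r hr => hHmono hr.2)
        _ = H T := by rw [intervalIntegral.integral_const]; norm_num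
    have hdiff : (∫ t in (1:ℝ)..T, (H t - H (t - 1))) ≤ H T := by
      rw [step3, step4]; linarith
    calc (∫ t in (1:ℝ)..T, Z t ^ 2) ≤ A * ∫ t in (1:ℝ)..T, (H t - H (t - 1)) := by
          rw [← step2]; exact step1
      _ ≤ A * H T := mul_le_mul_of_nonneg_left hdiff hA0
  · rw [intervalIntegral.integral_undef hint]
    exact mul_nonneg hA0 (hH0 T (by linarith))
end

section
/- Let w > 0, let f : [0, ∞) → ℝ be continuous, and let g : ℝ → ℝ be continuous and bounded, such that e^{−wt} f(t) − g(t) → 0 as t → ∞. Then e^{−2wT} ∫_0^T f(t)² dt − ∫_0^∞ e^{−2ws} g(T − s)² ds → 0 as T → ∞. -/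
open MeasureTheory Filter Set Topology

/-! With `h t = e^{-wt} f t`, the substitution `t = T - s` gives
`e^{-2wT} ∫_0^T f² = ∫_0^∞ e^{-2ws} 1_{[0,∞)}(T - s) h(T - s)² ds`, so the difference in question is
the convolution of the integrable kernel `e^{-2ws}` with `ψ = 1_{[0,∞)} h² - g²`, evaluated at `T`.
Since `h - g → 0` and `g` is bounded, `ψ` tends to `0` at infinity; being continuous on `[0, ∞)`,
it is also bounded, so dominated convergence shows that the convolution tends to `0`. -/

theorem ContinuousOn.exists_norm_le_Ici_of_isBoundedUnder {α E : Type*} [LinearOrder α]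
    [TopologicalSpace α] [CompactIccSpace α] [SeminormedAddCommGroup E] {h : α → E} {a : α}
    (hc : ContinuousOn h (Ici a)) (hb : IsBoundedUnder (· ≤ ·) atTop fun t => ‖h t‖) :
    ∃ C, ∀ t ∈ Ici a, ‖h t‖ ≤ C := by
  have : Nonempty α := ⟨a⟩
  obtain ⟨B, hB⟩ := hb
  obtain ⟨A, hA⟩ := eventually_atTop.1 (eventually_map.1 hB)
  obtain ⟨D, hD⟩ := isCompact_Icc.exists_bound_of_continuousOn
    (hc.mono (Icc_subset_Ici_self : Icc a A ⊆ Ici a))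
  refine ⟨max B D, fun t ht => ?_⟩
  rcases le_total t A with htA | htA
  · exact (hD t ⟨ht, htA⟩).trans (le_max_right _ _)
  · exact (hA t htA).trans (le_max_left _ _)

theorem Filter.Tendsto.sq_sub_sq {ι R : Type*} [NormedCommRing R] {l : Filter ι}
    {a b : ι → R} (hab : Tendsto (fun i => a i - b i) l (𝓝 0))
    (hb : IsBoundedUnder (· ≤ ·) l fun i => ‖b i‖) :
    Tendsto (fun i => a i ^ 2 - b i ^ 2) l (𝓝 0) := by
  have h := (hab.pow 2).add ((isBoundedUnder_le_mul_tendsto_zero hb hab).const_mul 2)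
  simp only [zero_pow two_ne_zero, mul_zero, add_zero] at h
  exact h.congr fun i => by ring

section Convolution

variable {μ : Measure ℝ} {k φ : ℝ → ℝ} {C : ℝ}

theorem MeasureTheory.Integrable.mul_comp_sub (hk : Integrable k μ) (hφ : Measurable φ)
    (hC : ∀ t, |φ t| ≤ C) (T : ℝ) : Integrable (fun s => k s * φ (T - s)) μ :=
  hk.mul_bdd (hφ.comp (measurable_const.sub measurable_id)).aestronglyMeasurable
    (ae_of_all _ fun s => hC (T - s))

theorem tendsto_integral_mul_comp_sub_atTop (hk : Integrable k μ) (hφ : Measurable φ)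
    (hC : ∀ t, |φ t| ≤ C) (hlim : Tendsto φ atTop (𝓝 0)) :
    Tendsto (fun T => ∫ s, k s * φ (T - s) ∂μ) atTop (𝓝 0) := by
  have hshift (s : ℝ) : Tendsto (fun T : ℝ => T - s) atTop atTop := by
    simpa [sub_eq_add_neg] using tendsto_atTop_add_const_right _ (-s) tendsto_id
  simpa using tendsto_integral_filter_of_dominated_convergence (fun s => ‖k s‖ * C)
    (Eventually.of_forall fun T => (hk.mul_comp_sub hφ hC T).aestronglyMeasurable)
    (Eventually.of_forall fun T => ae_of_all _ fun s => by
      rw [norm_mul]; exact mul_le_mul_of_nonneg_left (hC _) (norm_nonneg _))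
    (hk.norm.mul_const C)
    (ae_of_all _ fun s => ((hlim.comp (hshift s)).const_mul (k s)))

theorem tendsto_integral_mul_indicator_sq_sub_integral_mul_sq {h g : ℝ → ℝ} {a M : ℝ}
    (hk : Integrable k μ) (hh : ContinuousOn h (Ici a)) (hg : Continuous g) (hgM : ∀ t, |g t| ≤ M)
    (hlim : Tendsto (fun t => h t - g t) atTop (𝓝 0)) :
    Tendsto (fun T => ∫ s, k s * (Ici a).indicator (fun t => h t ^ 2) (T - s) ∂μ
      - ∫ s, k s * g (T - s) ^ 2 ∂μ) atTop (𝓝 0) := by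
  set H : ℝ → ℝ := (Ici a).indicator fun t => h t ^ 2
  set ψ : ℝ → ℝ := fun t => H t - g t ^ 2
  have hg_sq : ∀ t, |g t ^ 2| ≤ M ^ 2 := fun t => by
    simpa [abs_pow] using pow_le_pow_left₀ (abs_nonneg _) (hgM t) 2
  have hsq : Tendsto (fun t => h t ^ 2 - g t ^ 2) atTop (𝓝 0) :=
    hlim.sq_sub_sq ⟨M, eventually_map.2 (Eventually.of_forall hgM)⟩
  have hψ_lim : Tendsto ψ atTop (𝓝 0) := by
    refine hsq.congr' ?_
    filter_upwards [eventually_ge_atTop a] with t ht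
    simp [ψ, H, ht]
  have hψ_meas : Measurable ψ := by
    refine Measurable.sub ?_ (hg.measurable.pow_const 2)
    simp only [H, ← piecewise_eq_indicator]
    exact (hh.pow 2).measurable_piecewise continuousOn_const measurableSet_Ici
  obtain ⟨C, hC⟩ : ∃ C, ∀ t, |ψ t| ≤ C := by
    obtain ⟨C, hC⟩ := ((hh.pow 2).sub (hg.continuousOn.pow 2)).exists_norm_le_Ici_of_isBoundedUnder
      hsq.norm.isBoundedUnder_le
    refine ⟨max C (M ^ 2), fun t => ?_⟩
    rcases le_or_gt a t with ht | ht
    · simpa [ψ, H, ht] using (hC t ht).trans (le_max_left _ _)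
    · simpa [ψ, H, ht.not_ge] using (hg_sq t).trans (le_max_right _ _)
  refine (tendsto_integral_mul_comp_sub_atTop hk hψ_meas hC hψ_lim).congr fun T => ?_
  have hG := hk.mul_comp_sub (hg.measurable.pow_const 2) hg_sq T
  have hH : Integrable (fun s => k s * H (T - s)) μ :=
    ((hk.mul_comp_sub hψ_meas hC T).add hG).congr (ae_of_all _ fun s => by simp [ψ]; ring)
  simp only [ψ, mul_sub, integral_sub hH hG]

end Convolution

theorem integral_Ioi_mul_indicator_Ici_comp_sub (k F : ℝ → ℝ) {T : ℝ} (hT : 0 ≤ T) :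
    ∫ s in Ioi 0, k s * (Ici 0).indicator F (T - s) = ∫ s in (0 : ℝ)..T, k s * F (T - s) := by
  have h : (fun s => k s * (Ici 0).indicator F (T - s))
      = (Iic T).indicator fun s => k s * F (T - s) := by
    ext s
    by_cases hs : s ≤ T <;> simp [indicator, hs]
  rw [h, integral_indicator measurableSet_Iic, Measure.restrict_restrict measurableSet_Iic,
    inter_comm, Ioi_inter_Iic, intervalIntegral.integral_of_le hT]

theorem exp_mul_intervalIntegral_sq_eq (w T : ℝ) (f : ℝ → ℝ) :
    Real.exp (-2 * w * T) * ∫ t in (0 : ℝ)..T, f t ^ 2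
      = ∫ s in (0 : ℝ)..T, Real.exp (-2 * w * s) * (Real.exp (-w * (T - s)) * f (T - s)) ^ 2 := by
  have hsub : ∫ t in (0 : ℝ)..T, f t ^ 2 = ∫ s in (0 : ℝ)..T, f (T - s) ^ 2 := by
    simp [intervalIntegral.integral_comp_sub_left (fun t => f t ^ 2) T]
  rw [hsub, ← intervalIntegral.integral_const_mul]
  refine intervalIntegral.integral_congr fun s _ => ?_
  have : Real.exp (-2 * w * T) = Real.exp (-2 * w * s) * Real.exp (-w * (T - s)) ^ 2 := by
    rw [sq, ← Real.exp_add, ← Real.exp_add]; ring_nf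
  simp only [this]; ring

/-- If `w > 0`, `f` is continuous on `[0,∞)`, `g` is bounded and continuous on `ℝ`, and
`e^{−wt} f(t) − g(t) → 0` as `t → ∞`, then
`e^{−2wT} ∫_0^T f(t)² dt − ∫_0^∞ e^{−2ws} g(T−s)² ds → 0` as `T → ∞`. -/
theorem exp_weighted_sq_integral_periodic (w : ℝ) (hw : 0 < w) (f g : ℝ → ℝ)
    (hf : ContinuousOn f (Set.Ici (0:ℝ)))
    (hg : Continuous g) (hgb : ∃ M : ℝ, ∀ t : ℝ, |g t| ≤ M)
    (hlim : Tendsto (fun t : ℝ => Real.exp (-w * t) * f t - g t) atTop (nhds 0)) :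
    Tendsto (fun T : ℝ =>
        Real.exp (-2 * w * T) * (∫ t in (0:ℝ)..T, f t ^ 2)
          - ∫ s in Set.Ioi (0:ℝ), Real.exp (-2 * w * s) * g (T - s) ^ 2)
      atTop (nhds 0) := by
  obtain ⟨M, hM⟩ := hgb
  have hk : IntegrableOn (fun s => Real.exp (-2 * w * s)) (Ioi 0) := by
    simpa using exp_neg_integrableOn_Ioi 0 (by positivity : 0 < 2 * w)
  have hh : ContinuousOn (fun t => Real.exp (-w * t) * f t) (Ici 0) := by fun_prop
  refine (tendsto_integral_mul_indicator_sq_sub_integral_mul_sq hk hh hg hM hlim).congr' ?_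
  filter_upwards [eventually_ge_atTop 0] with T hT
  rw [integral_Ioi_mul_indicator_Ici_comp_sub _ _ hT, exp_mul_intervalIntegral_sq_eq]
end
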